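/- There exists a universal constant c > 0 such that for every ε > 0 and every pair of Borel probability measures P₀, P₁ on ℝ^m: if d_sig(P₀,P₁) < ε, then sup over a ∈ ℝ^m and t ∈ ℝ of |P₀{u : aᵀu ≤ t} − P₁{u : aᵀu ≤ t}| < c·ε. -/

import Mathlib

/-!
The indicator of the half-space `{u | aᵀu ≤ t}` is the pointwise limit of the sigmoid test
functions `σ(n (t - aᵀu) + √n)`: the shift `√n` is negligible against `n (t - aᵀu)` off the
boundary hyperplane, yet still sends the argument to `+∞` on it. By dominated convergence the
half-space probabilities are limits of sigmoid integrals, so their difference is bounded by the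
sigmoid IPM itself, and `c = 1` works.
-/

open MeasureTheory

/-- The sigmoid function `σ(t) = 1/(1 + e^{-t})`. -/
noncomputable def sigmoid (t : ℝ) : ℝ := 1 / (1 + Real.exp (-t))

/-- The sigmoid IPM between two measures on `ℝ^m`. -/
noncomputable def sigmoidIPM {m : ℕ} (P₀ P₁ : Measure (Fin m → ℝ)) : ℝ :=
  ⨆ p : (Fin m → ℝ) × ℝ,
    |(∫ z, sigmoid ((∑ i, p.1 i * z i) + p.2) ∂P₀) -
      ∫ z, sigmoid ((∑ i, p.1 i * z i) + p.2) ∂P₁|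

open Filter Topology Set

lemma sigmoid_eq_real_sigmoid : sigmoid = Real.sigmoid := by
  funext x
  rw [sigmoid, Real.sigmoid_def, one_div]

lemma Real.norm_sigmoid_le_one (x : ℝ) : ‖Real.sigmoid x‖ ≤ 1 := by
  rw [Real.norm_of_nonneg (Real.sigmoid_nonneg x)]
  exact Real.sigmoid_le_one x

lemma tendsto_sqrt_natCast_atTop : Tendsto (fun n : ℕ => √(n : ℝ)) atTop atTop :=
  Real.tendsto_sqrt_atTop.comp tendsto_natCast_atTop_atTop

lemma tendsto_sigmoid_natCast_mul_add_sqrt (s : ℝ) :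
    Tendsto (fun n : ℕ => Real.sigmoid (n * s + √n)) atTop (𝓝 ((Ici 0).indicator 1 s)) := by
  rcases le_or_gt 0 s with hs | hs
  · rw [indicator_of_mem (mem_Ici.mpr hs), Pi.one_apply]
    refine Real.tendsto_sigmoid_atTop.comp
      (tendsto_atTop_mono (fun n => ?_) tendsto_sqrt_natCast_atTop)
    linarith [mul_nonneg n.cast_nonneg hs]
  · rw [indicator_of_notMem (notMem_Ici.mpr hs)]
    have hfactor : (fun n : ℕ => n * s + √n) = fun n : ℕ => √n * (√n * s + 1) := by
      funext n
      rw [mul_add, ← mul_assoc, Real.mul_self_sqrt n.cast_nonneg, mul_one]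
    refine Real.tendsto_sigmoid_atBot.comp ?_
    rw [hfactor]
    exact tendsto_sqrt_natCast_atTop.atTop_mul_atBot₀ <|
      tendsto_atBot_add_const_right _ 1 (tendsto_sqrt_natCast_atTop.atTop_mul_const_of_neg' hs)

lemma tendsto_integral_sigmoid_natCast_mul_add_sqrt {Ω : Type*} [MeasurableSpace Ω]
    (P : Measure Ω) [IsFiniteMeasure P] {g : Ω → ℝ} (hg : Measurable g) :
    Tendsto (fun n : ℕ => ∫ ω, Real.sigmoid (n * g ω + √n) ∂P) atTop
      (𝓝 (P.real {ω | 0 ≤ g ω})) := by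
  have hindicator : P.real {ω | 0 ≤ g ω} = ∫ ω, (Ici 0).indicator 1 (g ω) ∂P := by
    rw [← integral_indicator_one (measurableSet_le measurable_const hg)]
    rfl
  rw [hindicator]
  refine tendsto_integral_of_dominated_convergence (fun _ => 1) (fun n => by fun_prop)
    (integrable_const 1) (fun n => ae_of_all _ fun ω => Real.norm_sigmoid_le_one _)
    (ae_of_all _ fun ω => tendsto_sigmoid_natCast_mul_add_sqrt (g ω))

lemma abs_integral_sigmoid_le_measureReal_univ {Ω : Type*} [MeasurableSpace Ω]
    (P : Measure Ω) [IsFiniteMeasure P] (f : Ω → ℝ) :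
    |∫ ω, sigmoid (f ω) ∂P| ≤ P.real univ := by
  simpa [sigmoid_eq_real_sigmoid] using
    norm_integral_le_of_norm_le_const (μ := P) (ae_of_all _ fun ω => Real.norm_sigmoid_le_one (f ω))

lemma abs_integral_sigmoid_sub_le_sigmoidIPM {m : ℕ} (P₀ P₁ : Measure (Fin m → ℝ))
    [IsFiniteMeasure P₀] [IsFiniteMeasure P₁] (θ : Fin m → ℝ) (μ : ℝ) :
    |(∫ z, sigmoid ((∑ i, θ i * z i) + μ) ∂P₀) - ∫ z, sigmoid ((∑ i, θ i * z i) + μ) ∂P₁|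
      ≤ sigmoidIPM P₀ P₁ := by
  refine le_ciSup_of_le ⟨P₀.real univ + P₁.real univ, ?_⟩ (θ, μ) le_rfl
  rintro _ ⟨p, rfl⟩
  exact (abs_sub _ _).trans (add_le_add (abs_integral_sigmoid_le_measureReal_univ P₀ _)
    (abs_integral_sigmoid_le_measureReal_univ P₁ _))

theorem abs_measureReal_halfspace_sub_le_sigmoidIPM {m : ℕ} (P₀ P₁ : Measure (Fin m → ℝ))
    [IsFiniteMeasure P₀] [IsFiniteMeasure P₁] (a : Fin m → ℝ) (t : ℝ) :
    |P₀.real {u | ∑ i, a i * u i ≤ t} - P₁.real {u | ∑ i, a i * u i ≤ t}|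
      ≤ sigmoidIPM P₀ P₁ := by
  set g : (Fin m → ℝ) → ℝ := fun u => t - ∑ i, a i * u i
  have hg : Measurable g := by fun_prop
  have hhalfspace : {u | ∑ i, a i * u i ≤ t} = {u | 0 ≤ g u} := by
    simp only [g, sub_nonneg]
  have htest (n : ℕ) :
      |(∫ u, Real.sigmoid (n * g u + √n) ∂P₀) - ∫ u, Real.sigmoid (n * g u + √n) ∂P₁|
        ≤ sigmoidIPM P₀ P₁ := by
    have hθμ (u : Fin m → ℝ) :
        (∑ i, (-(n : ℝ) * a i) * u i) + (n * t + √n) = n * g u + √n := by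
      simp only [g, mul_sub, Finset.mul_sum, neg_mul, mul_assoc, Finset.sum_neg_distrib]
      ring
    simpa only [hθμ, sigmoid_eq_real_sigmoid] using
      abs_integral_sigmoid_sub_le_sigmoidIPM P₀ P₁ (fun i => -(n : ℝ) * a i) (n * t + √n)
  rw [hhalfspace]
  exact le_of_tendsto (((tendsto_integral_sigmoid_natCast_mul_add_sqrt P₀ hg).sub
    (tendsto_integral_sigmoid_natCast_mul_add_sqrt P₁ hg)).abs) (Eventually.of_forall htest)

/-- there is a universal constant `c > 0` such that for every `ε > 0` and
every pair of Borel probability measures `P₀, P₁` on `ℝ^m` with `d_sig(P₀,P₁) < ε`,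
all half-space probabilities differ by less than `c·ε`:
`sup_{a,t} |P₀{u : aᵀu ≤ t} - P₁{u : aᵀu ≤ t}| < c·ε`. -/
theorem halfspace_bound_of_sigmoidIPM_lt :
    ∃ c : ℝ, 0 < c ∧
      ∀ (m : ℕ) (ε : ℝ), 0 < ε →
        ∀ (P₀ P₁ : Measure (Fin m → ℝ)),
          IsProbabilityMeasure P₀ → IsProbabilityMeasure P₁ →
          sigmoidIPM P₀ P₁ < ε →
          ∀ (a : Fin m → ℝ) (t : ℝ),
            |(P₀ {u | (∑ i, a i * u i) ≤ t}).toReal -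
              (P₁ {u | (∑ i, a i * u i) ≤ t}).toReal| < c * ε := by
  refine ⟨1, one_pos, ?_⟩
  intro m ε _ P₀ P₁ _ _ hIPM a t
  rw [one_mul]
  exact (abs_measureReal_halfspace_sub_le_sigmoidIPM P₀ P₁ a t).trans_lt hIPM
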